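/- Let f : M → M be a continuous map of a compact metric space with a Borel probability measure μ of full support such that μ-almost every point has dense orbit, and suppose B ⊆ M is a Borel set with μ(B) = 0. Then for every δ > 0 there exist a point q ∈ M \ B with dense orbit and N_0 ∈ ℕ such that {q, f(q), …, f^{N_0}(q)} is δ-dense in M; consequently, setting p = f^{N_0}(q), the set ⋃_{j=0}^{N_0} f^{-j}({p}) is δ-dense in M. -/
import Mathlib


open MeasureTheory

theorem stmt_15 {M : Type*} [MetricSpace M] [CompactSpace M]
    [MeasurableSpace M] [BorelSpace M]
    (f : M → M) (hf : Continuous f)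
    (μ : Measure M) [IsProbabilityMeasure μ] [μ.IsOpenPosMeasure]
    (hdense : ∀ᵐ x ∂μ, Dense (Set.range fun n => f^[n] x))
    (B : Set M) (hB : MeasurableSet B) (hB0 : μ B = 0) :
    ∀ δ : ℝ, 0 < δ →
      ∃ q ∈ Set.univ \ B, Dense (Set.range fun n => f^[n] q) ∧
        ∃ N0 : ℕ,
          (∀ x : M, ∃ j ≤ N0, dist x (f^[j] q) < δ) ∧
          (∀ x : M, ∃ y : M, (∃ j ≤ N0, f^[j] y = f^[N0] q) ∧ dist x y < δ) := by
  intro δ hδ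
  have hμne : μ ≠ 0 := IsProbabilityMeasure.ne_zero μ
  have hnotB : ∀ᵐ x ∂μ, x ∉ B := by
    rw [ae_iff]
    simpa using hB0
  have h := hdense.and hnotB
  have : (ae μ).NeBot := ae_neBot.mpr hμne
  obtain ⟨q, hqd, hqB⟩ := h.exists
  refine ⟨q, ⟨Set.mem_univ q, hqB⟩, hqd, ?_⟩
  -- compactness: finite subcover of balls around orbit points
  have hcover : (Set.univ : Set M) ⊆ ⋃ n : ℕ, Metric.ball (f^[n] q) δ := by
    intro x _
    obtain ⟨y, ⟨n, rfl⟩, hy⟩ := hqd.exists_dist_lt x hδ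
    exact Set.mem_iUnion.mpr ⟨n, by simpa [Metric.mem_ball, dist_comm] using hy⟩
  obtain ⟨t, ht⟩ := isCompact_univ.elim_finite_subcover
    (fun n : ℕ => Metric.ball (f^[n] q) δ) (fun n => Metric.isOpen_ball) hcover
  refine ⟨t.sup id, ?_, ?_⟩
  · intro x
    obtain ⟨n, hn, hx⟩ := Set.mem_iUnion₂.mp (ht (Set.mem_univ x))
    exact ⟨n, Finset.le_sup (f := id) hn, by simpa [Metric.mem_ball] using hx⟩
  · intro x
    obtain ⟨n, hn, hx⟩ := Set.mem_iUnion₂.mp (ht (Set.mem_univ x))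
    have hnle : n ≤ t.sup id := Finset.le_sup (f := id) hn
    refine ⟨f^[n] q, ⟨t.sup id - n, Nat.sub_le _ _, ?_⟩,
      by simpa [Metric.mem_ball] using hx⟩
    rw [← Function.iterate_add_apply, Nat.sub_add_cancel hnle]
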